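/- arXiv:1502.05306 — 3 statements merged into one kernel-verified Lean document; each statement's English description precedes it below -/
import Mathlib

section
/- Let d ≥ 2 and let φ(z) = P(z)/Q(z) be a rational map of degree d, where P(z) = Σ_{k=0}^d a_k z^k and Q(z) = Σ_{k=0}^d b_k z^k are coprime with max(deg P, deg Q) = d. Then φ commutes with the imaginary reflection τ(z) = -1/conj(z) if and only if d is odd and there exists θ ∈ ℝ such that b_k = (-1)^k e^{iθ} conj(a_{d-k}) for all k = 0,...,d. -/
open OnePoint Complex Polynomial

/-- The Möbius transformation determined by the matrix `[[a,b],[c,d]]`,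
acting on the Riemann sphere `OnePoint ℂ`. -/
noncomputable def moeb (a b c d : ℂ) (p : OnePoint ℂ) : OnePoint ℂ :=
  OnePoint.elim p (if c = 0 then ∞ else ((a / c : ℂ) : OnePoint ℂ))
    (fun z => if c * z + d = 0 then ∞ else (((a * z + b) / (c * z + d) : ℂ) : OnePoint ℂ))

/-- Complex conjugation extended to the Riemann sphere. -/
noncomputable def sphConj (p : OnePoint ℂ) : OnePoint ℂ :=
  OnePoint.elim p ∞ (fun z => ((starRingEnd ℂ) z : OnePoint ℂ))

/-- The imaginary reflection `τ(z) = -1/conj z` on the Riemann sphere. -/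
noncomputable def tauSph (p : OnePoint ℂ) : OnePoint ℂ :=
  moeb 0 (-1) 1 0 (sphConj p)

/-- The rational map on the Riemann sphere determined by a quotient `P/Q`
of (coprime) polynomials. -/
noncomputable def ratMap (P Q : Polynomial ℂ) (p : OnePoint ℂ) : OnePoint ℂ :=
  OnePoint.elim p
    (if Q.degree < P.degree then ∞
     else ((P.coeff Q.natDegree / Q.leadingCoeff : ℂ) : OnePoint ℂ))
    (fun z => if Q.eval z = 0 then ∞ else ((P.eval z / Q.eval z : ℂ) : OnePoint ℂ))

/-!
Write `φ` homogeneously as `z ↦ [P z : Q z]` and put `P♯(z) = z ^ d * conj (P (τ z))`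
(`tauDual d P`, a polynomial of degree `≤ d`). Then `φ ∘ τ = [conj P♯ : conj Q♯]` (also at `z = 0`,
because `max (deg P) (deg Q) = d`) and `τ ∘ φ = [-conj Q : conj P]`, so `φ` commutes with `τ` iff
`P * P♯ + Q * Q♯ = 0`. As `(P, Q)` and `(P♯, Q♯)` are coprime pairs, this forces `P♯ = -μ Q`
and `Q♯ = μ P` for a constant `μ ≠ 0`. Since `P♯♯ = (-1) ^ d P`, applying `♯` once more gives
`(-1) ^ d = -|μ| ^ 2`: `d` is odd and `|μ| = 1`, and `Q = -conj μ * P♯` is the coefficient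
relation. The point `∞` needs no separate check because `τ` is an involution.
-/

open ComplexConjugate

theorem coeff_sum_range_C_mul_X_pow {R : Type*} [Semiring R] (a : ℕ → R) {d k : ℕ}
    (hk : k ≤ d) : (∑ i ∈ Finset.range (d + 1), C (a i) * X ^ i).coeff k = a k := by
  simp [finsetSum_coeff, Nat.lt_succ_of_le hk]

theorem coeff_ne_zero_or_of_max_natDegree_eq {R : Type*} [Semiring R] {d : ℕ} {P Q : R[X]}
    (hdeg : max P.natDegree Q.natDegree = d) (hP0 : P ≠ 0) (hQ0 : Q ≠ 0) :
    P.coeff d ≠ 0 ∨ Q.coeff d ≠ 0 := by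
  rcases max_choice P.natDegree Q.natDegree with h | h <;> rw [h] at hdeg <;> subst hdeg
  · exact Or.inl (leadingCoeff_ne_zero.mpr hP0)
  · exact Or.inr (leadingCoeff_ne_zero.mpr hQ0)

theorem ne_zero_of_isCoprime_of_max_natDegree_ne_zero {R : Type*} [CommRing R]
    [NoZeroDivisors R] {P Q : R[X]} (h : IsCoprime P Q)
    (hd : max P.natDegree Q.natDegree ≠ 0) : P ≠ 0 := by
  rintro rfl
  simp [natDegree_eq_zero_of_isUnit (isCoprime_zero_left.mp h)] at hd

theorem eval_ne_zero_or_of_isCoprime {R : Type*} [CommRing R] [Nontrivial R] {P Q : R[X]}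
    (h : IsCoprime P Q) (z : R) : P.eval z ≠ 0 ∨ Q.eval z ≠ 0 := by
  simpa using aeval_ne_zero_of_isCoprime h z

theorem IsCoprime.exists_isUnit_of_mul_add_mul_eq_zero {R : Type*} [CommRing R]
    [NoZeroDivisors R] {a b c e : R} (ha : a ≠ 0) (hab : IsCoprime a b) (hce : IsCoprime c e)
    (h : a * c + b * e = 0) : ∃ u, IsUnit u ∧ c = -(u * b) ∧ e = u * a := by
  obtain ⟨u, rfl⟩ : a ∣ e := hab.dvd_of_dvd_mul_left ⟨-c, by linear_combination h⟩
  have hc : c = -(u * b) := by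
    have : a * (c + u * b) = 0 := by linear_combination h
    linear_combination (mul_eq_zero.mp this).resolve_left ha
  exact ⟨u, hce.isUnit_of_dvd' ⟨-b, by rw [hc]; ring⟩ ⟨a, by ring⟩, hc, by ring⟩

/-- The point `[p : q]` of the Riemann sphere (junk value `∞` at `p = q = 0`). -/
noncomputable def projPoint (p q : ℂ) : OnePoint ℂ :=
  if q = 0 then ∞ else ((p / q : ℂ) : OnePoint ℂ)

theorem projPoint_mul_mul {s : ℂ} (hs : s ≠ 0) (p q : ℂ) :
    projPoint (s * p) (s * q) = projPoint p q := by
  simp only [projPoint, mul_eq_zero, hs, false_or, mul_div_mul_left _ _ hs]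

theorem projPoint_eq_projPoint_iff {p q p' q' : ℂ} (h : p ≠ 0 ∨ q ≠ 0)
    (h' : p' ≠ 0 ∨ q' ≠ 0) : projPoint p q = projPoint p' q' ↔ p * q' = p' * q := by
  unfold projPoint
  by_cases hq : q = 0 <;> by_cases hq' : q' = 0 <;> simp_all [div_eq_div_iff]

theorem tauSph_infty : tauSph ∞ = ((0 : ℂ) : OnePoint ℂ) := by
  simp [tauSph, sphConj, moeb]

theorem tauSph_coe (z : ℂ) : tauSph z = projPoint (-1) (conj z) := by
  simp [tauSph, sphConj, moeb, projPoint]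

theorem tauSph_projPoint {p q : ℂ} (h : p ≠ 0 ∨ q ≠ 0) :
    tauSph (projPoint p q) = projPoint (-conj q) (conj p) := by
  by_cases hq : q = 0
  · have hp : conj p ≠ 0 := by simpa [hq] using h
    simp [projPoint, hq, hp, tauSph_infty]
  · by_cases hp : p = 0
    · simp [projPoint, hp, hq, tauSph_coe]
    · have hp' : conj p ≠ 0 := by simpa using hp
      have hq' : conj q ≠ 0 := by simpa using hq
      simp only [projPoint, hq, if_false, tauSph_coe, map_div₀, div_eq_zero_iff, hp', hq',
        or_self, OnePoint.coe_eq_coe]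
      field_simp

theorem tauSph_tauSph (p : OnePoint ℂ) : tauSph (tauSph p) = p := by
  induction p using OnePoint.rec with
  | infty => simp [tauSph_infty, tauSph_coe, projPoint]
  | coe z => rw [tauSph_coe, tauSph_projPoint (by simp)]; simp [projPoint]

theorem forall_tauSph_comm_of_coe {f : OnePoint ℂ → OnePoint ℂ}
    (h : ∀ z : ℂ, tauSph (f z) = f (tauSph z)) (p : OnePoint ℂ) :
    tauSph (f p) = f (tauSph p) := by
  induction p using OnePoint.rec with
  | infty =>
    have h0 : tauSph ((0 : ℂ) : OnePoint ℂ) = ∞ := by simp [tauSph_coe, projPoint]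
    rw [← h0, ← h, tauSph_tauSph, tauSph_tauSph]
  | coe z => exact h z

theorem ratMap_coe (P Q : ℂ[X]) (z : ℂ) : ratMap P Q z = projPoint (P.eval z) (Q.eval z) :=
  rfl

theorem ratMap_infty {d : ℕ} {P Q : ℂ[X]} (hdeg : max P.natDegree Q.natDegree = d)
    (hcop : IsCoprime P Q) : ratMap P Q ∞ = projPoint (P.coeff d) (Q.coeff d) := by
  by_cases hlt : Q.degree < P.degree
  · have hPd : P.natDegree = d := by have := natDegree_le_natDegree hlt.le; omega
    have hQd : Q.coeff d = 0 :=
      coeff_eq_zero_of_degree_lt (hPd ▸ hlt.trans_le degree_le_natDegree)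
    simp [ratMap, hlt, projPoint, hQd]
  · have hQ0 : Q ≠ 0 := by
      rintro rfl
      have hP0 : P = 0 := by simpa using not_lt.mp hlt
      exact not_isCoprime_zero_zero (hP0 ▸ hcop)
    have hQd : Q.natDegree = d := by have := natDegree_le_natDegree (not_lt.mp hlt); omega
    have hQc : Q.coeff d ≠ 0 := hQd ▸ leadingCoeff_ne_zero.mpr hQ0
    simp [ratMap, hlt, projPoint, hQc, leadingCoeff, hQd]

noncomputable def tauDual (d : ℕ) (P : ℂ[X]) : ℂ[X] :=
  ∑ k ∈ Finset.range (d + 1), C ((-1) ^ (d - k) * conj (P.coeff (d - k))) * X ^ k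

theorem coeff_tauDual (d : ℕ) (P : ℂ[X]) (k : ℕ) :
    (tauDual d P).coeff k = if k ≤ d then (-1) ^ (d - k) * conj (P.coeff (d - k)) else 0 := by
  simp only [tauDual, finsetSum_coeff, coeff_C_mul_X_pow, Finset.sum_ite_eq, Finset.mem_range,
    Nat.lt_succ_iff]

theorem eval_tauDual {d : ℕ} {P : ℂ[X]} (hP : P.natDegree ≤ d) {z : ℂ} (hz : z ≠ 0) :
    (tauDual d P).eval z = z ^ d * conj (P.eval (-1 / conj z)) := by
  rw [eval_eq_sum_range' (Nat.lt_succ_of_le hP), map_sum, Finset.mul_sum, tauDual,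
    eval_finsetSum, ← Finset.sum_range_reflect]
  refine Finset.sum_congr rfl fun k hk => ?_
  have hk : k ≤ d := Nat.lt_succ_iff.mp (Finset.mem_range.mp hk)
  simp only [eval_mul, eval_C, eval_pow, eval_X, map_mul, map_pow, map_div₀, map_neg, map_one,
    Complex.conj_conj, eval_neg, eval_one, Nat.add_sub_cancel, Nat.sub_sub_self hk]
  have hzd : z ^ d = z ^ (d - k) * z ^ k := by rw [← pow_add, Nat.sub_add_cancel hk]
  rw [hzd, div_pow]
  field_simp

theorem eval_zero_tauDual (d : ℕ) (P : ℂ[X]) :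
    (tauDual d P).eval 0 = (-1) ^ d * conj (P.coeff d) := by
  simp [← coeff_zero_eq_eval_zero, coeff_tauDual]

theorem tauDual_C_mul (d : ℕ) (c : ℂ) (P : ℂ[X]) :
    tauDual d (C c * P) = C (conj c) * tauDual d P := by
  ext k
  simp only [coeff_tauDual, coeff_C_mul, map_mul]
  split_ifs <;> ring

theorem tauDual_tauDual {d : ℕ} {P : ℂ[X]} (hP : P.natDegree ≤ d) :
    tauDual d (tauDual d P) = C ((-1) ^ d) * P := by
  ext k
  rw [coeff_tauDual, coeff_C_mul]
  split_ifs with hk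
  · rw [coeff_tauDual, if_pos (Nat.sub_le d k), Nat.sub_sub_self hk]
    simp only [map_mul, map_pow, map_neg, map_one, Complex.conj_conj]
    rw [← mul_assoc, ← pow_add, Nat.sub_add_cancel hk]
  · rw [coeff_eq_zero_of_natDegree_lt (by omega), mul_zero]

section TauDual

variable {d : ℕ} {P Q : ℂ[X]}

theorem isCoprime_tauDual (hdeg : max P.natDegree Q.natDegree = d) (hP0 : P ≠ 0)
    (hQ0 : Q ≠ 0) (hcop : IsCoprime P Q) : IsCoprime (tauDual d P) (tauDual d Q) := by
  rw [isCoprime_iff_aeval_ne_zero_of_isAlgClosed (k := ℂ) ℂ]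
  intro z
  simp only [coe_aeval_eq_eval]
  by_cases hz : z = 0
  · simpa [hz, eval_zero_tauDual] using coeff_ne_zero_or_of_max_natDegree_eq hdeg hP0 hQ0
  · simpa [eval_tauDual (hdeg ▸ le_max_left _ _) hz, eval_tauDual (hdeg ▸ le_max_right _ _) hz,
      hz] using eval_ne_zero_or_of_isCoprime hcop (-1 / conj z)

theorem ratMap_tauSph_coe (hdeg : max P.natDegree Q.natDegree = d) (hcop : IsCoprime P Q)
    (z : ℂ) : ratMap P Q (tauSph z) =
      projPoint (conj ((tauDual d P).eval z)) (conj ((tauDual d Q).eval z)) := by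
  by_cases hz : z = 0
  · subst hz
    have hτ : tauSph ((0 : ℂ) : OnePoint ℂ) = ∞ := by simp [tauSph_coe, projPoint]
    simp only [hτ, ratMap_infty hdeg hcop, eval_zero_tauDual, map_mul, map_pow, map_neg,
      map_one, Complex.conj_conj]
    exact (projPoint_mul_mul (pow_ne_zero d (neg_ne_zero.mpr one_ne_zero)) _ _).symm
  · have hz' : conj z ≠ 0 := by simpa using hz
    rw [tauSph_coe, projPoint, if_neg hz', ratMap_coe,
      eval_tauDual (hdeg ▸ le_max_left _ _) hz, eval_tauDual (hdeg ▸ le_max_right _ _) hz]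
    simp only [map_mul, map_pow, Complex.conj_conj]
    exact (projPoint_mul_mul (pow_ne_zero d hz') _ _).symm

theorem tauSph_ratMap_coe (hcop : IsCoprime P Q) (z : ℂ) :
    tauSph (ratMap P Q z) = projPoint (-conj (Q.eval z)) (conj (P.eval z)) :=
  tauSph_projPoint (eval_ne_zero_or_of_isCoprime hcop z)

theorem mul_tauDual_add_mul_tauDual_eq_zero (hdeg : max P.natDegree Q.natDegree = d)
    (hP0 : P ≠ 0) (hQ0 : Q ≠ 0) (hcop : IsCoprime P Q)
    (hcomm : ∀ p, tauSph (ratMap P Q p) = ratMap P Q (tauSph p)) :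
    P * tauDual d P + Q * tauDual d Q = 0 := by
  refine Polynomial.funext fun z => ?_
  have h := hcomm z
  rw [tauSph_ratMap_coe hcop, ratMap_tauSph_coe hdeg hcop, projPoint_eq_projPoint_iff] at h
  · apply (starRingEnd ℂ).injective
    simp only [eval_add, eval_mul, eval_zero, map_add, map_mul, map_zero]
    linear_combination -h
  · simpa [or_comm] using eval_ne_zero_or_of_isCoprime hcop z
  · simpa using eval_ne_zero_or_of_isCoprime (isCoprime_tauDual hdeg hP0 hQ0 hcop) z

theorem forall_tauSph_comm_of_tauDual_eq (hdeg : max P.natDegree Q.natDegree = d)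
    (hcop : IsCoprime P Q) {μ : ℂ} (hμ : μ ≠ 0)
    (hP : tauDual d P = -(C μ * Q)) (hQ : tauDual d Q = C μ * P) (p : OnePoint ℂ) :
    tauSph (ratMap P Q p) = ratMap P Q (tauSph p) := by
  refine forall_tauSph_comm_of_coe (fun z => ?_) p
  rw [tauSph_ratMap_coe hcop, ratMap_tauSph_coe hdeg hcop, hP, hQ]
  simp only [eval_neg, eval_mul, eval_C, map_neg, map_mul, ← mul_neg]
  exact (projPoint_mul_mul ((_root_.map_ne_zero _).mpr hμ) _ _).symm

theorem odd_and_norm_eq_one_of_tauDual_eq (hQd : Q.natDegree ≤ d) (hQ0 : Q ≠ 0) {μ : ℂ}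
    (hP : tauDual d P = -(C μ * Q)) (hQ : tauDual d Q = C μ * P) : Odd d ∧ ‖μ‖ = 1 := by
  have h : C ((-1) ^ d) * Q = C (-(‖μ‖ : ℂ) ^ 2) * Q := by
    rw [← tauDual_tauDual hQd, hQ, tauDual_C_mul, hP, ← Complex.conj_mul', C_neg, C_mul]
    ring
  have h' : ((-1) ^ d : ℂ) = -(‖μ‖ : ℂ) ^ 2 := C_injective (mul_right_cancel₀ hQ0 h)
  rcases Nat.even_or_odd d with hd | hd
  · rw [hd.neg_one_pow] at h'
    have : (1 : ℝ) = -‖μ‖ ^ 2 := by exact_mod_cast h'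
    nlinarith [sq_nonneg ‖μ‖]
  · rw [hd.neg_one_pow] at h'
    have : ‖μ‖ ^ 2 = 1 := by
      have : (-1 : ℝ) = -‖μ‖ ^ 2 := by exact_mod_cast h'
      linarith
    exact ⟨hd, (pow_eq_one_iff_of_nonneg (norm_nonneg μ) two_ne_zero).mp this⟩

theorem tauDual_eq_neg_C_mul_and_iff (hd : Odd d) (hP : P.natDegree ≤ d) {μ : ℂ}
    (hμ : ‖μ‖ = 1) :
    (tauDual d P = -(C μ * Q) ∧ tauDual d Q = C μ * P) ↔
      Q = -(C (conj μ) * tauDual d P) := by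
  have hμμ : C (conj μ) * C μ = 1 := by
    rw [← C_mul, Complex.conj_mul', hμ]
    simp
  constructor
  · rintro ⟨hPμ, -⟩
    rw [hPμ]
    linear_combination (-Q) * hμμ
  · intro hQ
    refine ⟨by rw [hQ]; linear_combination (-tauDual d P) * hμμ, ?_⟩
    rw [hQ, ← neg_mul, ← C_neg, tauDual_C_mul, tauDual_tauDual hP, hd.neg_one_pow]
    simp

theorem coeff_eq_iff_eq_neg_C_mul_tauDual (hd : Odd d) (hQ : Q.natDegree ≤ d) (c : ℂ) :
    (∀ k ≤ d, Q.coeff k = (-1) ^ k * c * conj (P.coeff (d - k))) ↔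
      Q = -(C c * tauDual d P) := by
  have hsign : ∀ k ≤ d, (-1 : ℂ) ^ k = -(-1) ^ (d - k) := by
    intro k hk
    have h : (-1 : ℂ) ^ (d - k) * (-1) ^ k = -1 := by
      rw [← pow_add, Nat.sub_add_cancel hk, hd.neg_one_pow]
    have hsq : ((-1 : ℂ) ^ k) ^ 2 = 1 := by rw [← pow_mul, mul_comm, pow_mul]; simp
    linear_combination (-1 : ℂ) ^ k * h - (-1 : ℂ) ^ (d - k) * hsq
  constructor
  · intro h
    ext k
    rw [coeff_neg, coeff_C_mul, coeff_tauDual]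
    split_ifs with hk
    · rw [h k hk, hsign k hk]
      ring
    · rw [coeff_eq_zero_of_natDegree_lt (by omega)]
      simp
  · intro h k hk
    rw [h, coeff_neg, coeff_C_mul, coeff_tauDual, if_pos hk, hsign k hk]
    ring

end TauDual

/-- `φ = P/Q` of degree `d ≥ 2` commutes with `τ(z) = -1/conj z`
iff `d` is odd and `b_k = (-1)^k e^{iθ} conj(a_{d-k})` for some real `θ`. -/
theorem commutes_with_tau_iff
    (d : ℕ) (hd : 2 ≤ d) (a b : ℕ → ℂ) (P Q : Polynomial ℂ)
    (hP : P = ∑ k ∈ Finset.range (d + 1), C (a k) * X ^ k)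
    (hQ : Q = ∑ k ∈ Finset.range (d + 1), C (b k) * X ^ k)
    (hcop : IsCoprime P Q) (hdeg : max P.natDegree Q.natDegree = d) :
    (∀ p, tauSph (ratMap P Q p) = ratMap P Q (tauSph p)) ↔
      (Odd d ∧ ∃ θ : ℝ, ∀ k ≤ d,
        b k = (-1) ^ k * Complex.exp (θ * Complex.I) * (starRingEnd ℂ) (a (d - k))) := by
  have hPd : P.natDegree ≤ d := hdeg ▸ le_max_left _ _
  have hQd : Q.natDegree ≤ d := hdeg ▸ le_max_right _ _
  have hP0 : P ≠ 0 := ne_zero_of_isCoprime_of_max_natDegree_ne_zero hcop (by omega)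
  have hQ0 : Q ≠ 0 :=
    ne_zero_of_isCoprime_of_max_natDegree_ne_zero hcop.symm (by rw [max_comm]; omega)
  have hab : ∀ c : ℂ, (∀ k ≤ d, b k = (-1) ^ k * c * conj (a (d - k))) ↔
      ∀ k ≤ d, Q.coeff k = (-1) ^ k * c * conj (P.coeff (d - k)) := fun c =>
    forall₂_congr fun k hk => by
      rw [hP, hQ, coeff_sum_range_C_mul_X_pow _ hk, coeff_sum_range_C_mul_X_pow _ (Nat.sub_le d k)]
  constructor
  · intro hcomm
    obtain ⟨u, hu, hPu, hQu⟩ := hcop.exists_isUnit_of_mul_add_mul_eq_zero hP0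
      (isCoprime_tauDual hdeg hP0 hQ0 hcop)
      (mul_tauDual_add_mul_tauDual_eq_zero hdeg hP0 hQ0 hcop hcomm)
    obtain ⟨μ, -, rfl⟩ := Polynomial.isUnit_iff.mp hu
    obtain ⟨hodd, hμ⟩ := odd_and_norm_eq_one_of_tauDual_eq hQd hQ0 hPu hQu
    have hexp : exp (arg (conj μ) * I) = conj μ := by
      simpa [hμ] using norm_mul_exp_arg_mul_I (conj μ)
    refine ⟨hodd, arg (conj μ), ?_⟩
    rw [hexp, hab, coeff_eq_iff_eq_neg_C_mul_tauDual hodd hQd]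
    exact (tauDual_eq_neg_C_mul_and_iff hodd hPd hμ).mp ⟨hPu, hQu⟩
  · rintro ⟨hodd, θ, hrel⟩
    set μ := conj (exp (θ * I))
    have hμ : ‖μ‖ = 1 := by simp [μ, norm_exp_ofReal_mul_I]
    rw [hab, coeff_eq_iff_eq_neg_C_mul_tauDual hodd hQd, ← Complex.conj_conj (exp _),
      ← tauDual_eq_neg_C_mul_and_iff hodd hPd hμ] at hrel
    exact forall_tauSph_comm_of_tauDual_eq hdeg hcop (norm_ne_zero_iff.mp (by simp [hμ]))
      hrel.1 hrel.2
end

section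
/- Let n, d ≥ 2 be integers. If there exists a rational map of degree d of the form φ(z) = z·ψ(z^n) with ψ a rational map of degree r, then d ∈ {nr - 1, nr, nr + 1}; in particular d is congruent to -1, 0, or 1 modulo n. -/
open OnePoint Complex Polynomial

/-!
Because `A(X^n)` and `B(X^n)` remain coprime, any common factor of `X * A(X^n)` and `B(X^n)`
divides `X`. Hence the reduced numerator and denominator of `φ` have degrees `n * deg A + 1 - c`
and `n * deg B - c` with `c ≤ 1`, and their maximum differs from `n * max (deg A) (deg B)` by at
most one.
-/

theorem IsCoprime.exists_eq_mul_of_mul_eq_mul {R : Type*} [CommRing R] [IsDomain R]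
    {P Q N D : R} (hPQ : IsCoprime P Q) (hQ : Q ≠ 0) (h : P * D = Q * N) :
    ∃ e, D = Q * e ∧ N = P * e := by
  obtain ⟨e, rfl⟩ : Q ∣ D := hPQ.symm.dvd_of_dvd_mul_left ⟨N, h⟩
  refine ⟨e, rfl, mul_left_cancel₀ hQ ?_⟩
  rw [← h]
  ring

theorem IsCoprime.dvd_of_dvd_mul_of_dvd {R : Type*} [CommSemiring R] {a b x e : R}
    (hab : IsCoprime a b) (hxa : e ∣ x * a) (hb : e ∣ b) : e ∣ x :=
  (hab.of_isCoprime_of_dvd_right hb).symm.dvd_of_dvd_mul_right hxa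

theorem exists_natDegree_reduced_X_mul_expand {K : Type*} [Field K] {n : ℕ} (hn : 0 < n)
    {A B P Q : K[X]} (hA : A ≠ 0) (hB : B ≠ 0) (hAB : IsCoprime A B)
    (hPQ : IsCoprime P Q) (hQ : Q ≠ 0) (heq : P * expand K n B = Q * (X * expand K n A)) :
    ∃ c ≤ 1, P.natDegree + c = A.natDegree * n + 1 ∧ Q.natDegree + c = B.natDegree * n := by
  obtain ⟨e, hBe, hAe⟩ := hPQ.exists_eq_mul_of_mul_eq_mul hQ heq
  have hXA : X * expand K n A ≠ 0 := mul_ne_zero X_ne_zero ((expand_ne_zero hn).2 hA)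
  have hP : P ≠ 0 := left_ne_zero_of_mul (hAe ▸ hXA)
  have he : e ≠ 0 := right_ne_zero_of_mul (hBe ▸ (expand_ne_zero hn).2 hB)
  have hAB' : IsCoprime (expand K n A) (expand K n B) := by
    simpa using hAB.map (expand K n).toRingHom
  have heX : e ∣ X :=
    hAB'.dvd_of_dvd_mul_of_dvd ⟨P, by rw [hAe, mul_comm]⟩ ⟨Q, by rw [hBe, mul_comm]⟩
  refine ⟨e.natDegree, by simpa using natDegree_le_of_dvd heX X_ne_zero, ?_, ?_⟩
  · rw [← natDegree_mul hP he, ← hAe, natDegree_mul X_ne_zero ((expand_ne_zero hn).2 hA),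
      natDegree_X, natDegree_expand, add_comm]
  · rw [← natDegree_mul hQ he, ← hBe, natDegree_expand]

theorem max_eq_max_mul_sub_one_or_of_add_eq {n a b p q c : ℕ} (hn : 0 < n) (hc : c ≤ 1)
    (hp : p + c = a * n + 1) (hq : q + c = b * n) :
    max p q = max a b * n - 1 ∨ max p q = max a b * n ∨ max p q = max a b * n + 1 := by
  rcases lt_or_ge a b with hab | hab
  · have : (a + 1) * n ≤ b * n := Nat.mul_le_mul_right n hab
    rw [add_one_mul] at this
    rw [max_eq_right hab.le]
    omega
  · have : b * n ≤ a * n := Nat.mul_le_mul_right n hab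
    rw [max_eq_left hab]
    omega

theorem degree_of_rotation_symmetric_map_general
    (n d r : ℕ) (hn : 2 ≤ n) (hr : 1 ≤ r)
    (A B P Q : Polynomial ℂ) (hB : B ≠ 0) (hQ : Q ≠ 0)
    (hAB : IsCoprime A B) (hrdeg : max A.natDegree B.natDegree = r)
    (hPQ : IsCoprime P Q) (hdeg : max P.natDegree Q.natDegree = d)
    (heq : P * B.comp (X ^ n) = Q * (X * A.comp (X ^ n))) :
    d = n * r - 1 ∨ d = n * r ∨ d = n * r + 1 := by
  have hA : A ≠ 0 := by
    rintro rfl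
    have hB1 : B.natDegree = 0 := natDegree_eq_zero_of_isUnit (isCoprime_zero_left.mp hAB)
    rw [natDegree_zero, hB1] at hrdeg
    omega
  simp only [← expand_eq_comp_X_pow] at heq
  obtain ⟨c, hc, hPc, hQc⟩ :=
    exists_natDegree_reduced_X_mul_expand (by omega) hA hB hAB hPQ hQ heq
  rw [← hdeg, ← hrdeg, mul_comm n]
  exact max_eq_max_mul_sub_one_or_of_add_eq (by omega) hc hPc hQc

/-- if `φ(z) = z ψ(z^n)` has degree `d` with `ψ` of degree `r`,
then `d ∈ {nr-1, nr, nr+1}`. -/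
theorem degree_of_rotation_symmetric_map
    (n d r : ℕ) (hn : 2 ≤ n) (hd : 2 ≤ d) (hr : 1 ≤ r)
    (A B P Q : Polynomial ℂ) (hB : B ≠ 0) (hQ : Q ≠ 0)
    (hAB : IsCoprime A B) (hrdeg : max A.natDegree B.natDegree = r)
    (hPQ : IsCoprime P Q) (hdeg : max P.natDegree Q.natDegree = d)
    (heq : P * B.comp (X ^ n) = Q * (X * A.comp (X ^ n))) :
    d = n * r - 1 ∨ d = n * r ∨ d = n * r + 1 :=
  degree_of_rotation_symmetric_map_general n d r hn hr A B P Q hB hQ hAB hrdeg hPQ hdeg heq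
end

section
/- Let n ≥ 2 and let ψ be a rational map with φ(z) = z·ψ(z^n). Then φ commutes with the reflection R(z) = β·conj(z), |β| = 1, if and only if ψ(z) = conj(ψ)(z/β^n) for all z. -/
open OnePoint Complex Polynomial

/-!
Write `b = β ^ n`. Since `|β| = 1` we have `conj β = β⁻¹`, and for `w = z ^ n` one computes
`R (φ z) = β z̄ · conj (A w / B w)` and `φ (R z) = β z̄ · conj (Ã w / B̃ w)`, where
`Ã = conj(A)(X / b)` and `B̃ = conj(B)(X / b)`. Away from `z = 0` and the poles, commuting is
therefore `A / B = Ã / B̃`, i.e. the polynomial identity `A B̃ = Ã B`. Conversely, that identity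
between two reduced fractions forces `B` and `B̃` to have the same zeros, so the poles match too.
At `∞`: the coefficients of `z A(z ^ n)` live in degrees `≡ 1 (mod n)`, while `deg B(z ^ n)` is a
multiple of `n`, so `φ ∞ ∈ {0, ∞}`, and both are fixed by `R`.
-/

namespace Polynomial

variable {R : Type*} [CommRing R] [IsDomain R]

theorem eq_of_eval_eq_of_eval_ne_zero [Infinite R] {p q r : R[X]} (hr : r ≠ 0)
    (h : ∀ x, r.eval x ≠ 0 → p.eval x = q.eval x) : p = q :=
  eq_of_infinite_eval_eq p q <| ((finite_setOfPred_isRoot hr).infinite_compl).mono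
    fun x hx => h x hx

theorem eval_ne_zero_of_isCoprime {f g : R[X]} (hfg : IsCoprime f g) {x : R}
    (hf : f.eval x = 0) : g.eval x ≠ 0 := by
  obtain ⟨u, v, huv⟩ := hfg
  intro hg
  simpa [hf, hg] using congrArg (eval x) huv

theorem eval_eq_zero_iff_of_mul_eq_mul {f g f' g' : R[X]} (hfg : IsCoprime f g)
    (hfg' : IsCoprime f' g') (h : f * g' = f' * g) (x : R) :
    g.eval x = 0 ↔ g'.eval x = 0 := by
  have hx := congrArg (eval x) h
  simp only [eval_mul] at hx
  constructor
  · intro hg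
    rw [hg, mul_zero] at hx
    exact (mul_eq_zero.mp hx).resolve_left (eval_ne_zero_of_isCoprime hfg.symm hg)
  · intro hg'
    rw [hg', mul_zero] at hx
    exact (mul_eq_zero.mp hx.symm).resolve_left (eval_ne_zero_of_isCoprime hfg'.symm hg')

section Field

variable {K : Type*} [Field K] [Infinite K]

theorem mul_eq_mul_of_div_eval_eq {f g f' g' r : K[X]} (hr : r ≠ 0) (hg : g ≠ 0) (hg' : g' ≠ 0)
    (h : ∀ x, r.eval x ≠ 0 → g.eval x ≠ 0 → g'.eval x ≠ 0 →
      f.eval x / g.eval x = f'.eval x / g'.eval x) :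
    f * g' = f' * g := by
  refine eq_of_eval_eq_of_eval_ne_zero (mul_ne_zero (mul_ne_zero hr hg) hg') fun x hx => ?_
  simp only [eval_mul, ne_eq, mul_eq_zero, not_or] at hx ⊢
  exact (div_eq_div_iff hx.1.2 hx.2).mp (h x hx.1.1 hx.1.2 hx.2)

end Field

theorem coeff_X_mul_expand_mul {S : Type*} [CommSemiring S] {n : ℕ} (hn : 2 ≤ n) (p : S[X])
    (m : ℕ) : (X * expand S n p).coeff (n * m) = 0 := by
  cases m with
  | zero => rw [mul_zero, coeff_X_mul_zero]
  | succ k =>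
    have hk : n * (k + 1) = (n * k + (n - 1)) + 1 := by
      rw [mul_add, mul_one, add_assoc, Nat.sub_add_cancel (by omega)]
    have hndvd : ¬ n ∣ n * k + (n - 1) := by
      rw [Nat.dvd_add_right (dvd_mul_right n k)]
      exact Nat.not_dvd_of_pos_of_lt (by omega) (by omega)
    rw [hk, coeff_X_mul, coeff_expand (by omega), if_neg hndvd]

end Polynomial

open Polynomial ComplexConjugate

/-- `conj(p)(X / b)`: the paper's `conj(ψ)(z / β ^ n)` is `conjScale (β ^ n)` applied to numerator
and denominator of `ψ`. -/
noncomputable def conjScale (b : ℂ) : ℂ[X] →+* ℂ[X] :=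
  (compRingHom (C b⁻¹ * X)).comp (mapRingHom conj)

theorem eval_conjScale (b : ℂ) (p : ℂ[X]) (w : ℂ) :
    (conjScale b p).eval w = (p.map conj).eval (w / b) := by
  simp only [conjScale, RingHom.coe_comp, Function.comp_apply, coe_compRingHom_apply,
    coe_mapRingHom, eval_comp, eval_mul, eval_C, eval_X, div_eq_inv_mul]

theorem conjScale_ne_zero {b : ℂ} (hb : b ≠ 0) {p : ℂ[X]} (hp : p ≠ 0) : conjScale b p ≠ 0 := by
  rw [conjScale, RingHom.comp_apply, coe_compRingHom_apply, ne_eq,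
    comp_C_mul_X_eq_zero_iff (mem_nonZeroDivisors_of_ne_zero (inv_ne_zero hb)), coe_mapRingHom,
    Polynomial.map_eq_zero_iff (RingHom.injective _)]
  exact hp

theorem eval_mul_conj {β : ℂ} (hβ : ‖β‖ = 1) (p : ℂ[X]) (z : ℂ) :
    p.eval (β * conj z) = conj ((p.map conj).eval (z / β)) := by
  have hz : z / β = conj (β * conj z) := by
    rw [map_mul, conj_conj, ← inv_eq_conj hβ, div_eq_inv_mul]
  rw [hz, eval_map_apply, conj_conj]

theorem forall_div_eval_eq_iff {b : ℂ} (hb : b ≠ 0) {A B : ℂ[X]} (hB : B ≠ 0) :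
    (∀ z, B.eval z ≠ 0 → (B.map conj).eval (z / b) ≠ 0 →
      A.eval z / B.eval z = (A.map conj).eval (z / b) / (B.map conj).eval (z / b)) ↔
    A * conjScale b B = conjScale b A * B := by
  simp only [← eval_conjScale]
  constructor
  · exact fun h => mul_eq_mul_of_div_eval_eq one_ne_zero hB (conjScale_ne_zero hb hB)
      fun z _ => h z
  · intro h z hz hz'
    rw [div_eq_div_iff hz hz']
    simpa only [eval_mul] using congrArg (eval z) h

theorem moeb_sphConj_coe (β z : ℂ) : moeb β 0 0 1 (sphConj z) = ↑(β * conj z) := by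
  simp [moeb, sphConj]

theorem moeb_sphConj_infty (β : ℂ) : moeb β 0 0 1 (sphConj ∞) = ∞ := by
  simp [moeb, sphConj]

section ratMap

variable {P Q : ℂ[X]}

theorem ratMap_coe_of_eval_ne_zero {z : ℂ} (h : Q.eval z ≠ 0) :
    ratMap P Q z = ↑(P.eval z / Q.eval z) := by
  simp [ratMap, h]

theorem ratMap_coe_of_eval_eq_zero {z : ℂ} (h : Q.eval z = 0) : ratMap P Q z = ∞ := by
  simp [ratMap, h]

theorem ratMap_infty_of_coeff_eq_zero (h : P.coeff Q.natDegree = 0) :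
    ratMap P Q ∞ = ∞ ∨ ratMap P Q ∞ = ((0 : ℂ) : OnePoint ℂ) := by
  by_cases hdeg : Q.degree < P.degree <;> simp [ratMap, hdeg, h]

end ratMap

section reflection

variable {n : ℕ} {β : ℂ} (A B : ℂ[X])

local notation "φ" => ratMap (X * A.comp (X ^ n)) (B.comp (X ^ n))

theorem ratMap_X_mul_comp_X_pow_infty (hn : 2 ≤ n) : φ ∞ = ∞ ∨ φ ∞ = ((0 : ℂ) : OnePoint ℂ) := by
  apply ratMap_infty_of_coeff_eq_zero
  rw [natDegree_comp, natDegree_X_pow, mul_comm B.natDegree, ← expand_eq_comp_X_pow]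
  exact coeff_X_mul_expand_mul hn A _

theorem eval_comp_X_pow_mul_conj (hβ : ‖β‖ = 1) (p : ℂ[X]) (z : ℂ) :
    (p.comp (X ^ n)).eval (β * conj z) = conj ((conjScale (β ^ n) p).eval (z ^ n)) := by
  have hβn : ‖β ^ n‖ = 1 := by rw [norm_pow, hβ, one_pow]
  rw [eval_comp, eval_X_pow, mul_pow, ← map_pow, eval_mul_conj hβn, eval_conjScale]

theorem moeb_sphConj_ratMap_coe (z : ℂ) :
    moeb β 0 0 1 (sphConj (φ z)) =
      if B.eval (z ^ n) = 0 then ∞ else ↑(β * conj z * conj (A.eval (z ^ n) / B.eval (z ^ n))) := by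
  have hQ : (B.comp (X ^ n)).eval z = B.eval (z ^ n) := by rw [eval_comp, eval_X_pow]
  split_ifs with hB
  · rw [ratMap_coe_of_eval_eq_zero (hQ ▸ hB), moeb_sphConj_infty]
  · rw [ratMap_coe_of_eval_ne_zero (hQ ▸ hB), moeb_sphConj_coe, hQ, eval_mul, eval_X, eval_comp,
      eval_X_pow, mul_div_assoc, map_mul, mul_assoc]

theorem ratMap_moeb_sphConj_coe (hβ : ‖β‖ = 1) (z : ℂ) :
    φ (moeb β 0 0 1 (sphConj z)) =
      if (conjScale (β ^ n) B).eval (z ^ n) = 0 then ∞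
      else ↑(β * conj z *
        conj ((conjScale (β ^ n) A).eval (z ^ n) / (conjScale (β ^ n) B).eval (z ^ n))) := by
  have hQ := eval_comp_X_pow_mul_conj (n := n) hβ B z
  rw [moeb_sphConj_coe]
  split_ifs with hB
  · rw [ratMap_coe_of_eval_eq_zero (by rw [hQ, hB, map_zero])]
  · rw [ratMap_coe_of_eval_ne_zero (by rwa [hQ, _root_.map_ne_zero]), hQ, eval_mul, eval_X,
      eval_comp_X_pow_mul_conj hβ A z, mul_div_assoc, ← map_div₀]

theorem mul_conjScale_eq_of_commute (hn : 0 < n) (hβ : ‖β‖ = 1) (hB : B ≠ 0)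
    (hcomm : ∀ p, moeb β 0 0 1 (sphConj (φ p)) = φ (moeb β 0 0 1 (sphConj p))) :
    A * conjScale (β ^ n) B = conjScale (β ^ n) A * B := by
  have hβ0 : β ≠ 0 := ne_zero_of_norm_ne_zero (hβ ▸ one_ne_zero)
  refine mul_eq_mul_of_div_eval_eq X_ne_zero hB (conjScale_ne_zero (pow_ne_zero n hβ0) hB)
    fun w hw hBw hBw' => ?_
  obtain ⟨z, rfl⟩ := IsAlgClosed.exists_pow_nat_eq w hn
  have hz : β * conj z ≠ 0 := by
    refine mul_ne_zero hβ0 ((_root_.map_ne_zero _).mpr ?_)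
    rintro rfl
    simp [zero_pow hn.ne'] at hw
  have key := hcomm z
  rw [moeb_sphConj_ratMap_coe, ratMap_moeb_sphConj_coe A B hβ, if_neg hBw, if_neg hBw',
    coe_eq_coe] at key
  exact (starRingEnd ℂ).injective (mul_left_cancel₀ hz key)

theorem commute_of_mul_conjScale_eq (hn : 2 ≤ n) (hβ : ‖β‖ = 1) (hAB : IsCoprime A B)
    (h : A * conjScale (β ^ n) B = conjScale (β ^ n) A * B) (p : OnePoint ℂ) :
    moeb β 0 0 1 (sphConj (φ p)) = φ (moeb β 0 0 1 (sphConj p)) := by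
  have hzero := eval_eq_zero_iff_of_mul_eq_mul hAB (hAB.map _) h
  induction p using OnePoint.rec with
  | infty =>
    rw [moeb_sphConj_infty]
    rcases ratMap_X_mul_comp_X_pow_infty A B hn with hinf | h0
    · rw [hinf, moeb_sphConj_infty]
    · rw [h0, moeb_sphConj_coe, map_zero, mul_zero]
  | coe z =>
    rw [moeb_sphConj_ratMap_coe, ratMap_moeb_sphConj_coe A B hβ]
    by_cases hBz : B.eval (z ^ n) = 0
    · rw [if_pos hBz, if_pos ((hzero _).mp hBz)]
    · have hBz' := (hzero _).not.mp hBz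
      have hcross := congrArg (eval (z ^ n)) h
      simp only [eval_mul] at hcross
      rw [if_neg hBz, if_neg hBz', (div_eq_div_iff hBz hBz').mpr hcross]

end reflection

/-- `φ(z) = z ψ(z^n)` commutes with the reflection
`R(z) = β conj z`, `|β| = 1`, iff `ψ(z) = conj(ψ)(z/β^n)`. -/
theorem commutes_with_reflection_iff
    (n : ℕ) (hn : 2 ≤ n) (β : ℂ) (hβ : ‖β‖ = 1)
    (A B : Polynomial ℂ) (hAB : IsCoprime A B) (hB : B ≠ 0) :
    (∀ p, moeb β 0 0 1 (sphConj (ratMap (X * A.comp (X ^ n)) (B.comp (X ^ n)) p))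
        = ratMap (X * A.comp (X ^ n)) (B.comp (X ^ n)) (moeb β 0 0 1 (sphConj p))) ↔
      (∀ z : ℂ, B.eval z ≠ 0 → (B.map (starRingEnd ℂ)).eval (z / β ^ n) ≠ 0 →
        A.eval z / B.eval z
          = (A.map (starRingEnd ℂ)).eval (z / β ^ n) /
            (B.map (starRingEnd ℂ)).eval (z / β ^ n)) := by
  have hβ0 : β ≠ 0 := ne_zero_of_norm_ne_zero (hβ ▸ one_ne_zero)
  rw [forall_div_eval_eq_iff (pow_ne_zero n hβ0) hB]
  exact ⟨mul_conjScale_eq_of_commute A B (by omega) hβ hB,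
    commute_of_mul_conjScale_eq A B hn hβ hAB⟩
end
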